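/- arXiv:2206.10025 — 7 statements merged into one kernel-verified Lean document; each statement's English description precedes it below -/
import Mathlib

section
/- Let A be a DFA over alphabet {a,b} with at most k states (k ≥ 1) that accepts ε and a^k and rejects a^i for all 0 < i < k. Then A has exactly k states, δ(s_0, a^k) = s_0, and for each i with 0 ≤ i < k, δ(δ(s_0, a^i), a) = δ(s_0, a^{(i+1) mod k}). -/
/-!
The states `sᵢ = δ(s₀, aⁱ)` for `0 ≤ i ≤ k` can coincide only as `s₀ = s_k`: if `sᵢ = sⱼ` with
`i < j ≤ k`, then reading `a^(k-j)` more gives `s_(i+k-j) = s_k ∈ F`, so `i + k - j` is `0` or `k`,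
i.e. `i = 0` and `j = k`. Hence `s₀, …, s_(k-1)` are distinct, so there are at least `k` states,
while `k + 1` states `s₀, …, s_k` among at most `k` must collide, which forces `s_k = s₀`.
-/

namespace DFA

variable {α σ : Type*} (A : DFA α σ) (x : α)

theorem eval_replicate_add (m n : ℕ) :
    A.eval (List.replicate (m + n) x) =
      A.evalFrom (A.eval (List.replicate m x)) (List.replicate n x) := by
  rw [List.replicate_add, eval, evalFrom_of_append]

theorem eval_replicate_succ (n : ℕ) :
    A.eval (List.replicate (n + 1) x) = A.step (A.eval (List.replicate n x)) x := by
  rw [eval_replicate_add, List.replicate_one, evalFrom_singleton]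

variable {A x} {k : ℕ} (hacc : List.replicate k x ∈ A.accepts)
  (hrej : ∀ i, 0 < i → i < k → List.replicate i x ∉ A.accepts)
include hacc hrej

theorem eq_zero_and_eq_of_eval_replicate_eq {i j : ℕ} (hij : i < j) (hjk : j ≤ k)
    (h : A.eval (List.replicate i x) = A.eval (List.replicate j x)) : i = 0 ∧ j = k := by
  by_contra hne
  apply hrej (i + (k - j)) (by omega) (by omega)
  have hreach : A.eval (List.replicate (i + (k - j)) x) = A.eval (List.replicate k x) := by
    rw [eval_replicate_add, h, ← eval_replicate_add, Nat.add_sub_cancel' hjk]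
  rwa [mem_accepts, hreach]

theorem injective_eval_replicate_fin :
    Function.Injective fun i : Fin k ↦ A.eval (List.replicate i x) :=
  Function.Injective.of_lt_imp_ne fun _ j hij h ↦
    j.is_lt.ne (eq_zero_and_eq_of_eval_replicate_eq hacc hrej hij j.is_lt.le h).2

theorem eval_replicate_eq_start [Fintype σ] (hcard : Fintype.card σ ≤ k) :
    A.eval (List.replicate k x) = A.start := by
  obtain ⟨i, j, hij, h⟩ : ∃ i j : Fin (k + 1), i < j ∧
      A.eval (List.replicate i x) = A.eval (List.replicate j x) := by
    by_contra! hinj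
    have := Fintype.card_le_of_injective _ (Function.Injective.of_lt_imp_ne hinj)
    simp only [Fintype.card_fin] at this
    omega
  obtain ⟨hi, hj⟩ :=
    eq_zero_and_eq_of_eval_replicate_eq hacc hrej hij (Nat.lt_succ_iff.mp j.is_lt) h
  rw [← hj, ← h, hi, List.replicate_zero, eval_nil]

theorem card_eq_of_card_le [Fintype σ] (hcard : Fintype.card σ ≤ k) : Fintype.card σ = k :=
  hcard.antisymm <| by
    simpa using Fintype.card_le_of_injective _ (injective_eval_replicate_fin hacc hrej)

end DFA

/-- Letter `a` is `false`, letter `b` is `true`. -/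
theorem dfa_a_cycle_structure_general {σ : Type} [Fintype σ] (k : ℕ)
    (A : DFA Bool σ) (hcard : Fintype.card σ ≤ k)
    (hak : List.replicate k false ∈ A.accepts)
    (hrej : ∀ i, 0 < i → i < k → List.replicate i false ∉ A.accepts) :
    Fintype.card σ = k ∧
    A.eval (List.replicate k false) = A.start ∧
    ∀ i, i < k →
      A.step (A.eval (List.replicate i false)) false =
        A.eval (List.replicate ((i + 1) % k) false) := by
  have hcycle := DFA.eval_replicate_eq_start hak hrej hcard
  refine ⟨DFA.card_eq_of_card_le hak hrej hcard, hcycle, fun i hi ↦ ?_⟩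
  rw [← DFA.eval_replicate_succ]
  rcases (show i + 1 ≤ k by omega).lt_or_eq with hlt | heq
  · rw [Nat.mod_eq_of_lt hlt]
  · rw [heq, Nat.mod_self, hcycle, List.replicate_zero, DFA.eval_nil]

/-- Letter `a` is `false`, letter `b` is `true`. A DFA with at most `k` states accepting
`ε` and `a^k` and rejecting every `a^i` with `0 < i < k` has exactly `k` states,
satisfies `δ(s₀, a^k) = s₀`, and its states `sᵢ = δ(s₀, aⁱ)` form an `a`-cycle. -/
theorem dfa_a_cycle_structure {σ : Type} [Fintype σ] (k : ℕ) (hk : 1 ≤ k)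
    (A : DFA Bool σ) (hcard : Fintype.card σ ≤ k)
    (hε : [] ∈ A.accepts)
    (hak : List.replicate k false ∈ A.accepts)
    (hrej : ∀ i, 0 < i → i < k → List.replicate i false ∉ A.accepts) :
    Fintype.card σ = k ∧
    A.eval (List.replicate k false) = A.start ∧
    ∀ i, i < k →
      A.step (A.eval (List.replicate i false)) false =
        A.eval (List.replicate ((i + 1) % k) false) :=
  dfa_a_cycle_structure_general k A hcard hak hrej
end

section
/- Let φ be a 3CNF formula with n ≥ 1 variables x_0,...,x_{n-1} and m ≥ 1 clauses C_0,...,C_{m-1}, where each clause contains only positive literals or only negative literals. Let k = n + m and define P = {ε, a^k} ∪ {a^i b b : C_i positive} and N = {a^i : 0 < i < k} ∪ {a^i b b : C_i negative} ∪ {a^i b a^{k-r} : 0 ≤ i ≤ m-1, 0 ≤ r < k, and (r < m or x_{r-m} ∉ C_i)}. If φ has a satisfying assignment, then there exists a DFA over {a,b} with exactly k states that accepts every word in P and rejects every word in N. -/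
/-!
The `a`-transitions form a cycle of length `k` through the accepting state `0`, so `a^t` is
accepted iff `k ∣ t`, and a word followed by `a^(k - r)` is accepted iff the word leads to state
`r`. From clause state `s_i`, `b` leads to the state `s_{m+j}` of a variable `x_j ∈ C_i` that is
true exactly when `C_i` is positive; a second `b` returns to `0` iff `x_j` is true, and
`m + j` is never one of the excluded values of `r`.
-/

def cycleDFA {k : ℕ} [NeZero k] (g : Fin k → Fin k) : DFA Bool (Fin k) where
  step q c := bif c then g q else q + 1
  start := 0
  accept := {0}

namespace cycleDFA

open Fin.NatCast Fin.CommRing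

variable {k : ℕ} [NeZero k] (g : Fin k → Fin k)

theorem mem_accepts_iff {x : List Bool} : x ∈ (cycleDFA g).accepts ↔ (cycleDFA g).eval x = 0 :=
  Set.mem_singleton_iff

theorem evalFrom_replicate_false (q : Fin k) (t : ℕ) :
    (cycleDFA g).evalFrom q (List.replicate t false) = q + (t : Fin k) := by
  induction t generalizing q with
  | zero => simp
  | succ t ih =>
    rw [List.replicate_succ, DFA.evalFrom_cons, ih]
    change q + 1 + t = q + ((t + 1 : ℕ) : Fin k)
    push_cast
    ring

theorem eval_replicate_false (t : ℕ) :
    (cycleDFA g).eval (List.replicate t false) = (t : Fin k) := by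
  rw [DFA.eval, evalFrom_replicate_false]
  exact zero_add _

theorem eval_replicate_false_append_true (t : ℕ) :
    (cycleDFA g).eval (List.replicate t false ++ [true]) = g (t : Fin k) := by
  rw [DFA.eval_append_singleton, eval_replicate_false]
  rfl

theorem mem_accepts_replicate_false (t : ℕ) :
    List.replicate t false ∈ (cycleDFA g).accepts ↔ k ∣ t := by
  rw [mem_accepts_iff, eval_replicate_false, Fin.natCast_eq_zero]

theorem append_replicate_false_mem_accepts_iff (x : List Bool) {r : ℕ} (hr : r < k) :
    x ++ List.replicate (k - r) false ∈ (cycleDFA g).accepts ↔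
      ((cycleDFA g).eval x : ℕ) = r := by
  rw [mem_accepts_iff, DFA.eval, DFA.evalFrom_of_append, evalFrom_replicate_false,
    Nat.cast_sub hr.le, Fin.natCast_self, zero_sub, ← sub_eq_add_neg, sub_eq_zero,
    Fin.ext_iff, Fin.val_cast_of_lt hr]

end cycleDFA

open Fin.NatCast in
theorem Fin.natCast_val_eq_castAdd {m : ℕ} (n : ℕ) [NeZero (m + n)] (i : Fin m) :
    ((i : ℕ) : Fin (m + n)) = Fin.castAdd n i :=
  Fin.ext (Fin.val_cast_of_lt (by omega))

section Assignment

variable {m n : ℕ} [NeZero (m + n)] (w : Fin m → Fin n) (β : Fin n → Bool)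

/-- State `castAdd n i` is the paper's `s_i` (clause `i`), state `natAdd m j` is `s_{m+j}`
(variable `j`), and `w i` is a variable witnessing that clause `i` is satisfied. -/
def assignmentStep : Fin (m + n) → Fin (m + n) :=
  Fin.addCases (fun i => Fin.natAdd m (w i)) fun j => bif β j then 0 else Fin.natAdd m j

theorem assignmentStep.eval_replicate_false_append_true (i : Fin m) :
    (cycleDFA (assignmentStep w β)).eval (List.replicate i false ++ [true]) =
      Fin.natAdd m (w i) := by
  rw [cycleDFA.eval_replicate_false_append_true, Fin.natCast_val_eq_castAdd, assignmentStep,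
    Fin.addCases_left]

theorem assignmentStep.replicate_false_append_true_true_mem_accepts_iff (i : Fin m) :
    List.replicate i false ++ [true, true] ∈ (cycleDFA (assignmentStep w β)).accepts ↔
      β (w i) = true := by
  rw [cycleDFA.mem_accepts_iff, ← List.singleton_append, ← List.append_assoc,
    DFA.eval_append_singleton, assignmentStep.eval_replicate_false_append_true]
  change assignmentStep w β (Fin.natAdd m (w i)) = 0 ↔ _
  rw [assignmentStep, Fin.addCases_right]
  cases β (w i)
  · simp [Fin.ext_iff, i.pos.ne']
  · simp

end Assignment

/-- Letter `a` is `false` and letter `b` is `true`; clause `C i` is all-positive when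
`pos i = true` and all-negative otherwise. -/
theorem satisfiable_implies_consistent_dfa_general (n m : ℕ) (hn : 1 ≤ n)
    (C : Fin m → Finset (Fin n)) (pos : Fin m → Bool)
    (β : Fin n → Bool) (hβ : ∀ i, ∃ j ∈ C i, β j = pos i) :
    ∃ (σ : Type) (_ : Fintype σ) (A : DFA Bool σ),
      Fintype.card σ = n + m ∧
      [] ∈ A.accepts ∧
      List.replicate (n + m) false ∈ A.accepts ∧
      (∀ i : Fin m, pos i = true →
        List.replicate (i : ℕ) false ++ [true, true] ∈ A.accepts) ∧
      (∀ i, 0 < i → i < n + m → List.replicate i false ∉ A.accepts) ∧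
      (∀ i : Fin m, pos i = false →
        List.replicate (i : ℕ) false ++ [true, true] ∉ A.accepts) ∧
      (∀ i : Fin m, ∀ r : ℕ, r < n + m →
        (r < m ∨ ∀ j : Fin n, m + (j : ℕ) = r → j ∉ C i) →
        List.replicate (i : ℕ) false ++ [true] ++ List.replicate (n + m - r) false
          ∉ A.accepts) := by
  choose w hwC hwβ using hβ
  have : NeZero (m + n) := ⟨by omega⟩
  rw [Nat.add_comm n m]
  refine ⟨Fin (m + n), inferInstance, cycleDFA (assignmentStep w β), Fintype.card_fin _,
    Set.mem_singleton _, ?_, fun i hi => ?_, fun i hi0 hik => ?_, fun i hi => ?_,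
    fun i r hr hrC => ?_⟩
  · exact (cycleDFA.mem_accepts_replicate_false _ _).2 dvd_rfl
  · rwa [assignmentStep.replicate_false_append_true_true_mem_accepts_iff, hwβ]
  · rw [cycleDFA.mem_accepts_replicate_false]
    exact fun hdvd => (Nat.le_of_dvd hi0 hdvd).not_gt hik
  · rw [assignmentStep.replicate_false_append_true_true_mem_accepts_iff, hwβ, hi]
    exact Bool.false_ne_true
  · rw [cycleDFA.append_replicate_false_mem_accepts_iff _ _ hr,
      assignmentStep.eval_replicate_false_append_true, Fin.val_natAdd]
    rintro rfl
    rcases hrC with hlt | hnotC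
    · omega
    · exact hnotC (w i) rfl (hwC i)

/-- Letter `a` is `false`, letter `b` is `true`. A pure 3CNF formula is given by clauses
`C i` (sets of variables) with polarity `pos i` (`true` = all-positive clause). If the
formula has a satisfying assignment `β`, then there is a DFA over `{a,b}` with exactly
`k = n + m` states accepting every word of `P` and rejecting every word of `N`. -/
theorem satisfiable_implies_consistent_dfa (n m : ℕ) (hn : 1 ≤ n) (hm : 1 ≤ m)
    (C : Fin m → Finset (Fin n)) (pos : Fin m → Bool)
    (h3 : ∀ i, (C i).card ≤ 3)
    (β : Fin n → Bool) (hβ : ∀ i, ∃ j ∈ C i, β j = pos i) :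
    ∃ (σ : Type) (_ : Fintype σ) (A : DFA Bool σ),
      Fintype.card σ = n + m ∧
      [] ∈ A.accepts ∧
      List.replicate (n + m) false ∈ A.accepts ∧
      (∀ i : Fin m, pos i = true →
        List.replicate (i : ℕ) false ++ [true, true] ∈ A.accepts) ∧
      (∀ i, 0 < i → i < n + m → List.replicate i false ∉ A.accepts) ∧
      (∀ i : Fin m, pos i = false →
        List.replicate (i : ℕ) false ++ [true, true] ∉ A.accepts) ∧
      (∀ i : Fin m, ∀ r : ℕ, r < n + m →
        (r < m ∨ ∀ j : Fin n, m + (j : ℕ) = r → j ∉ C i) →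
        List.replicate (i : ℕ) false ++ [true] ++ List.replicate (n + m - r) false
          ∉ A.accepts) :=
  satisfiable_implies_consistent_dfa_general n m hn C pos β hβ
end

section
/- With φ, k, P, N as in the Gold-style reduction (P = {ε, a^k} ∪ {a^i bb : C_i positive}, N = {a^i : 0<i<k} ∪ {a^i bb : C_i negative} ∪ {a^i b a^{k-r} : 0≤i≤m-1, 0≤r<k, (r<m or x_{r-m} ∉ C_i)}), if there exists a DFA over {a,b} with at most k = n+m states accepting all words of P and rejecting all words of N, then φ is satisfiable. -/
/-!
Write `s t` for the state reached on `a^t`. Since `a^k` is accepted but no `a^t` with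
`0 < t < k` is, the states `s 0, …, s (k-1)` are distinct, and as there are at most `k`
states they are all of them. So for each clause `C i` the state `δ(s i, b)` is some `s r`,
whence `a^i b a^(k-r)` is accepted. It is not a negative example, which forces `r = m + j`
for a variable `x j ∈ C i`; the sign of `C i`, read off from `a^i bb`, then says whether
`δ(s (m+j), b)` is accepting, and we take that as the value of `x j`.
-/

namespace DFA

variable {α σ : Type*} (M : DFA α σ)

theorem evalFrom_replicate_add (s : σ) (c : α) (t u : ℕ) :
    M.evalFrom s (List.replicate (t + u) c) =
      M.evalFrom (M.evalFrom s (List.replicate t c)) (List.replicate u c) := by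
  rw [List.replicate_add, evalFrom_of_append]

theorem append_mem_accepts_iff_of_eval_eq {u v : List α} (huv : M.eval u = M.eval v)
    (w : List α) : u ++ w ∈ M.accepts ↔ v ++ w ∈ M.accepts := by
  have huv' : M.evalFrom M.start u = M.evalFrom M.start v := huv
  simp only [mem_accepts, DFA.eval, evalFrom_of_append, huv']

theorem injective_evalFrom_replicate {s : σ} {c : α} {k : ℕ}
    (hk : List.replicate k c ∈ M.acceptsFrom s)
    (hlt : ∀ t, 0 < t → t < k → List.replicate t c ∉ M.acceptsFrom s) :
    Function.Injective fun t : Fin k => M.evalFrom s (List.replicate t c) := by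
  refine Function.Injective.of_lt_imp_ne fun t u htu heq => ?_
  -- if the states after `c^t` and `c^u` agree, then `c^(t + (k - u))` leads where `c^k` does
  apply hlt (t + (k - u)) (by omega) (by omega)
  rw [mem_acceptsFrom, evalFrom_replicate_add, heq, ← evalFrom_replicate_add,
    Nat.add_sub_cancel' u.2.le]
  exact hk

theorem surjective_evalFrom_replicate [Fintype σ] {s : σ} {c : α} {k : ℕ}
    (hk : List.replicate k c ∈ M.acceptsFrom s)
    (hlt : ∀ t, 0 < t → t < k → List.replicate t c ∉ M.acceptsFrom s)
    (hcard : Fintype.card σ ≤ k) :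
    Function.Surjective fun t : Fin k => M.evalFrom s (List.replicate t c) := by
  have hinj := M.injective_evalFrom_replicate hk hlt
  have hcard_eq : Fintype.card (Fin k) = Fintype.card σ :=
    le_antisymm (Fintype.card_le_of_injective _ hinj) (by simpa using hcard)
  exact ((Fintype.bijective_iff_injective_and_card _).2 ⟨hinj, hcard_eq⟩).2

end DFA

/-- Letter `a` is `false`, letter `b` is `true`. -/
theorem consistent_dfa_implies_satisfiable_general (n m : ℕ)
    (C : Fin m → Finset (Fin n)) (pos : Fin m → Bool)
    (h : ∃ (σ : Type) (_ : Fintype σ) (A : DFA Bool σ),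
      Fintype.card σ ≤ n + m ∧
      [] ∈ A.accepts ∧
      List.replicate (n + m) false ∈ A.accepts ∧
      (∀ i : Fin m, pos i = true →
        List.replicate (i : ℕ) false ++ [true, true] ∈ A.accepts) ∧
      (∀ i, 0 < i → i < n + m → List.replicate i false ∉ A.accepts) ∧
      (∀ i : Fin m, pos i = false →
        List.replicate (i : ℕ) false ++ [true, true] ∉ A.accepts) ∧
      (∀ i : Fin m, ∀ r : ℕ, r < n + m →
        (r < m ∨ ∀ j : Fin n, m + (j : ℕ) = r → j ∉ C i) →
        List.replicate (i : ℕ) false ++ [true] ++ List.replicate (n + m - r) false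
          ∉ A.accepts)) :
    ∃ β : Fin n → Bool, ∀ i, ∃ j ∈ C i, β j = pos i := by
  classical
  obtain ⟨σ, _, M, hcard, -, hk, hpos, hpow, hneg, hN⟩ := h
  have hsurj := M.surjective_evalFrom_replicate hk hpow hcard
  refine ⟨fun j => decide (M.step (M.eval (List.replicate (m + j) false)) true ∈ M.accept),
    fun i => ?_⟩
  obtain ⟨r, hr⟩ := hsurj (M.eval (List.replicate i false ++ [true]))
  have hacc :
      List.replicate i false ++ [true] ++ List.replicate (n + m - r) false ∈ M.accepts := by
    rw [M.append_mem_accepts_iff_of_eval_eq hr.symm, ← List.replicate_add,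
      Nat.add_sub_cancel' r.2.le]
    exact hk
  obtain ⟨j, hjr, hjC⟩ : ∃ j : Fin n, m + (j : ℕ) = r ∧ j ∈ C i := by
    by_contra! hno
    exact hN i r r.2 (Or.inr hno) hacc
  refine ⟨j, hjC, ?_⟩
  have hbb : M.eval (List.replicate i false ++ [true, true]) =
      M.step (M.eval (List.replicate (m + j) false)) true := by
    rw [show [true, true] = [true] ++ [true] from rfl, ← List.append_assoc,
      DFA.eval_append_singleton, hjr, ← hr]
    rfl
  cases hp : pos i
  · simpa [DFA.mem_accepts, hbb] using hneg i hp
  · simpa [DFA.mem_accepts, hbb] using hpos i hp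

/-- Letter `a` is `false`, letter `b` is `true`. If some DFA over `{a,b}` with at most
`k = n + m` states accepts every word of `P` and rejects every word of `N` (for the
Gold-style reduction sets built from a pure CNF formula), then the formula is satisfiable. -/
theorem consistent_dfa_implies_satisfiable (n m : ℕ) (hn : 1 ≤ n) (hm : 1 ≤ m)
    (C : Fin m → Finset (Fin n)) (pos : Fin m → Bool)
    (h : ∃ (σ : Type) (_ : Fintype σ) (A : DFA Bool σ),
      Fintype.card σ ≤ n + m ∧
      [] ∈ A.accepts ∧
      List.replicate (n + m) false ∈ A.accepts ∧
      (∀ i : Fin m, pos i = true →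
        List.replicate (i : ℕ) false ++ [true, true] ∈ A.accepts) ∧
      (∀ i, 0 < i → i < n + m → List.replicate i false ∉ A.accepts) ∧
      (∀ i : Fin m, pos i = false →
        List.replicate (i : ℕ) false ++ [true, true] ∉ A.accepts) ∧
      (∀ i : Fin m, ∀ r : ℕ, r < n + m →
        (r < m ∨ ∀ j : Fin n, m + (j : ℕ) = r → j ∉ C i) →
        List.replicate (i : ℕ) false ++ [true] ++ List.replicate (n + m - r) false
          ∉ A.accepts)) :
    ∃ β : Fin n → Bool, ∀ i, ∃ j ∈ C i, β j = pos i :=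
  consistent_dfa_implies_satisfiable_general n m C pos h
end

section
/- Let A be a DFA over {a,b} with at most k = n+m states consistent with the sets P and N of the Gold-style reduction (in particular accepting ε and a^k, rejecting a^i for 0<i<k, and rejecting every word a^i b a^{k-r} with 0≤i≤m-1, 0≤r<k, and (r<m or x_{r-m} ∉ C_i)). Then for every clause index i with 0 ≤ i ≤ m-1, the state δ(s_i, b) equals s_{m+j} for some variable index j with x_j ∈ C_i, where s_t = δ(s_0, a^t). -/
/-!
The `a`-powers `a^t`, `t < k`, reach pairwise distinct states: if `a^p` and `a^q` with `p < q`
led to the same state, then `a^(p + k - q)` would behave like `a^k` and be accepted. With at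
most `k` states these are all the states, so `δ(s_i, b) = s_r` for some `r < k`, and then
`a^i b a^(k-r)` behaves like `a^k` and is accepted. The sample rejects this word unless
`r = m + j` with `x_j ∈ C_i`.
-/

namespace DFA

variable {α σ : Type*} (M : DFA α σ)

theorem eval_append (x y : List α) : M.eval (x ++ y) = M.evalFrom (M.eval x) y :=
  M.evalFrom_of_append _ _ _

theorem append_mem_accepts_iff_of_eval_eq_s6 {x y : List α} (h : M.eval x = M.eval y)
    (z : List α) : x ++ z ∈ M.accepts ↔ y ++ z ∈ M.accepts := by
  simp only [mem_accepts, eval_append, h]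

theorem replicate_mem_accepts_of_eval_eq {c : α} {k p q : ℕ} (hq : q ≤ k)
    (h : M.eval (List.replicate p c) = M.eval (List.replicate q c))
    (hk : List.replicate k c ∈ M.accepts) :
    List.replicate (p + (k - q)) c ∈ M.accepts := by
  rwa [List.replicate_add, M.append_mem_accepts_iff_of_eval_eq_s6 h, ← List.replicate_add,
    Nat.add_sub_cancel' hq]

theorem injective_eval_replicate {c : α} {k : ℕ} (hk : List.replicate k c ∈ M.accepts)
    (hrej : ∀ i, 0 < i → i < k → List.replicate i c ∉ M.accepts) :
    Function.Injective fun t : Fin k => M.eval (List.replicate t c) := by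
  refine .of_lt_imp_ne fun p q hpq h => ?_
  have hpq' : (p : ℕ) < q := hpq
  exact hrej (p + (k - q)) (by omega) (by omega)
    (M.replicate_mem_accepts_of_eval_eq q.isLt.le h hk)

theorem bijective_eval_replicate [Fintype σ] {c : α} {k : ℕ}
    (hcard : Fintype.card σ ≤ k) (hk : List.replicate k c ∈ M.accepts)
    (hrej : ∀ i, 0 < i → i < k → List.replicate i c ∉ M.accepts) :
    Function.Bijective fun t : Fin k => M.eval (List.replicate t c) := by
  have hinj := M.injective_eval_replicate hk hrej
  refine (Fintype.bijective_iff_injective_and_card _).2 ⟨hinj, ?_⟩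
  simpa using le_antisymm (by simpa using Fintype.card_le_of_injective _ hinj) hcard

end DFA

/-- Letter `a` is `false`, letter `b` is `true`. -/
theorem dfa_b_transition_hits_clause_variable_general {σ : Type} [Fintype σ]
    (n m : ℕ)
    (C : Fin m → Finset (Fin n))
    (A : DFA Bool σ) (hcard : Fintype.card σ ≤ n + m)
    (hak : List.replicate (n + m) false ∈ A.accepts)
    (hrej : ∀ i, 0 < i → i < n + m → List.replicate i false ∉ A.accepts)
    (hrej2 : ∀ i : Fin m, ∀ r : ℕ, r < n + m →
      (r < m ∨ ∀ j : Fin n, m + (j : ℕ) = r → j ∉ C i) →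
      List.replicate (i : ℕ) false ++ [true] ++ List.replicate (n + m - r) false
        ∉ A.accepts) :
    ∀ i : Fin m, ∃ j ∈ C i,
      A.step (A.eval (List.replicate (i : ℕ) false)) true =
        A.eval (List.replicate (m + (j : ℕ)) false) := by
  intro i
  obtain ⟨r, hr⟩ := (A.bijective_eval_replicate hcard hak hrej).surjective
    (A.step (A.eval (List.replicate (i : ℕ) false)) true)
  have hacc : List.replicate (i : ℕ) false ++ [true] ++ List.replicate (n + m - r) false
      ∈ A.accepts := by
    rwa [A.append_mem_accepts_iff_of_eval_eq_s6 (y := List.replicate r false)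
      (by rw [DFA.eval_append_singleton]; exact hr.symm), ← List.replicate_add,
      Nat.add_sub_cancel' r.isLt.le]
  obtain ⟨-, j, hj, hjC⟩ : m ≤ r ∧ ∃ j : Fin n, m + (j : ℕ) = r ∧ j ∈ C i := by
    simpa using mt (hrej2 i r r.isLt) (not_not.2 hacc)
  exact ⟨j, hjC, by rw [hj]; exact hr.symm⟩

/-- Letter `a` is `false`, letter `b` is `true`. For a DFA with at most `k = n + m` states
consistent with the Gold-style sample (accepting `ε` and `a^k`, rejecting `a^i` for
`0 < i < k`, and rejecting every `a^i b a^{k-r}` with `i < m`, `r < k` and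
(`r < m` or `x_{r-m} ∉ C i`)), the `b`-transition out of each clause state `s_i` leads to
a variable state `s_{m+j}` with `x_j ∈ C i`. -/
theorem dfa_b_transition_hits_clause_variable {σ : Type} [Fintype σ]
    (n m : ℕ) (hn : 1 ≤ n) (hm : 1 ≤ m)
    (C : Fin m → Finset (Fin n))
    (A : DFA Bool σ) (hcard : Fintype.card σ ≤ n + m)
    (hε : [] ∈ A.accepts)
    (hak : List.replicate (n + m) false ∈ A.accepts)
    (hrej : ∀ i, 0 < i → i < n + m → List.replicate i false ∉ A.accepts)
    (hrej2 : ∀ i : Fin m, ∀ r : ℕ, r < n + m →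
      (r < m ∨ ∀ j : Fin n, m + (j : ℕ) = r → j ∉ C i) →
      List.replicate (i : ℕ) false ++ [true] ++ List.replicate (n + m - r) false
        ∉ A.accepts) :
    ∀ i : Fin m, ∃ j ∈ C i,
      A.step (A.eval (List.replicate (i : ℕ) false)) true =
        A.eval (List.replicate (m + (j : ℕ)) false) :=
  dfa_b_transition_hits_clause_variable_general n m C A hcard hak hrej hrej2
end

section
/- There is no DFA over {a,b} with exactly 3 states that accepts all words in P = {a^3, a b a^3 b, a^2 b a^3 b} and rejects all words in N ⊇ {a, a^2, a^4, a^5, a b a, a b a^3}. More precisely: any 3-state DFA accepting a^3 and rejecting a, a^2, a^4, a^5 must have its states forming an a-cycle of length 3 with the initial state accepting, and then the constraints a b a^3 b accepted, a b a and a b a^3 rejected are jointly unsatisfiable. -/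
/-!
Write `f` for the `a`-transition and `q` for the state reached on `a`. The acceptance pattern of
`a, a², a³, a⁴, a⁵` forces `q, f q, f² q` to be distinct, hence all of the three states, and then
`f³ q = q`. The state `t` reached on `ab` is one of these three, and each choice contradicts one
sample: `t = q` makes `a b a³ b` end in `q`, `t = f q` makes `a b a` end in `f² q`, and
`t = f² q` makes `a b a³` end in `f² q`.
-/

open Function

theorem Fintype.eq_or_eq_or_eq_of_card_eq_three {σ : Type*} [Fintype σ]
    (hcard : Fintype.card σ = 3) {a b c : σ} (hab : a ≠ b) (hac : a ≠ c) (hbc : b ≠ c) (x : σ) :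
    x = a ∨ x = b ∨ x = c := by
  classical
  have huniv : ({a, b, c} : Finset σ) = Finset.univ :=
    Finset.eq_univ_of_card _ (by rw [Finset.card_eq_three.2 ⟨a, b, c, hab, hac, hbc, rfl⟩, hcard])
  simpa [← huniv] using Finset.mem_univ x

namespace Function

variable {σ : Type*} [Fintype σ] {f : σ → σ} {q : σ} (P : σ → Prop)

theorem eq_or_eq_or_eq_iterate_of_card_eq_three (hcard : Fintype.card σ = 3) (h0 : ¬P q)
    (h1 : ¬P (f q)) (h2 : P (f^[2] q)) (x : σ) : x = q ∨ x = f q ∨ x = f^[2] q := by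
  have h02 : q ≠ f^[2] q := fun h => h0 (h ▸ h2)
  have h12 : f q ≠ f^[2] q := fun h => h1 (h ▸ h2)
  have h01 : q ≠ f q := fun h => h12 (by rw [iterate_succ_apply, iterate_one, ← h, ← h])
  exact Fintype.eq_or_eq_or_eq_of_card_eq_three hcard h01 h02 h12 x

theorem isPeriodicPt_three_of_card_eq_three (hcard : Fintype.card σ = 3) (h0 : ¬P q)
    (h1 : ¬P (f q)) (h2 : P (f^[2] q)) (h3 : ¬P (f^[3] q)) (h4 : ¬P (f^[4] q)) :
    IsPeriodicPt f 3 q := by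
  rcases eq_or_eq_or_eq_iterate_of_card_eq_three P hcard h0 h1 h2 (f^[3] q) with h | h | h
  · exact h
  · refine absurd ?_ h4
    rwa [iterate_succ_apply', h]
  · exact absurd (h ▸ h2) h3

end Function

theorem DFA.evalFrom_replicate {α σ : Type*} (A : DFA α σ) (s : σ) (a : α) (n : ℕ) :
    A.evalFrom s (List.replicate n a) = (A.step · a)^[n] s := by
  induction n generalizing s with
  | zero => rfl
  | succ n ih => rw [List.replicate_succ, DFA.evalFrom_cons, ih, iterate_succ_apply]

/-- Letter `a` is `false`, letter `b` is `true`. -/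
theorem no_three_state_dfa_counterexample :
    ¬ ∃ (σ : Type) (_ : Fintype σ) (A : DFA Bool σ),
      Fintype.card σ = 3 ∧
      List.replicate 3 false ∈ A.accepts ∧
      ([false] ++ [true] ++ List.replicate 3 false ++ [true]) ∈ A.accepts ∧
      (List.replicate 2 false ++ [true] ++ List.replicate 3 false ++ [true]) ∈ A.accepts ∧
      [false] ∉ A.accepts ∧
      List.replicate 2 false ∉ A.accepts ∧
      List.replicate 4 false ∉ A.accepts ∧
      List.replicate 5 false ∉ A.accepts ∧
      [false, true, false] ∉ A.accepts ∧
      [false, true, false, false, false] ∉ A.accepts := by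
  rintro ⟨σ, _, A, hcard, h3, haba3b, -, h1, h2, h4, h5, haba, haba3⟩
  set f : σ → σ := (A.step · false)
  set q := A.step A.start false
  set t := A.step q true
  have hpow : ∀ n, List.replicate (n + 1) false ∈ A.accepts ↔ f^[n] q ∈ A.accept := fun n => by
    rw [DFA.mem_accepts, DFA.eval, DFA.evalFrom_replicate, iterate_succ_apply]
  replace h1 : q ∉ A.accept := (hpow 0).not.1 h1
  replace h2 : f q ∉ A.accept := (hpow 1).not.1 h2
  replace h3 := (hpow 2).1 h3
  replace h4 := (hpow 3).not.1 h4
  replace h5 := (hpow 4).not.1 h5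
  change f t ∉ A.accept at haba
  change f^[3] t ∉ A.accept at haba3
  change A.step (f^[3] t) true ∈ A.accept at haba3b
  have hper := isPeriodicPt_three_of_card_eq_three (f := f) (· ∈ A.accept) hcard h1 h2 h3 h4 h5
  rcases eq_or_eq_or_eq_iterate_of_card_eq_three (f := f) (· ∈ A.accept) hcard h1 h2 h3 t
    with ht | ht | ht
  · have hloop : A.step q true = q := ht
    rw [ht, hper.eq, hloop] at haba3b
    exact h1 haba3b
  · rw [ht] at haba
    exact haba h3
  · rw [ht, (hper.apply_iterate 2).eq] at haba3
    exact haba3 h3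
end

section
/- If φ is a pure CNF formula with n variables and m clauses, then φ is satisfiable if and only if there exists a DFA over the binary alphabet {a,b} with at most n+m states accepting every word of P and rejecting every word of N, where P = {ε, a^{n+m}} ∪ {a^i bb : C_i positive, 0≤i<m} and N = {a^i : 0 < i < n+m} ∪ {a^i bb : C_i negative, 0≤i<m} ∪ {a^i b a^{n+m-r} : 0≤i<m, 0≤r<n+m, (r<m or x_{r-m} ∉ C_i)}. -/
open Fin.NatCast

private lemma evalFrom_cons {α σ : Type*} (A : DFA α σ) (s : σ) (a : α) (l : List α) :
    A.evalFrom s (a :: l) = A.evalFrom (A.step s a) l := rfl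

private lemma evalFrom_replicate_false {N : ℕ} [NeZero N] (A : DFA Bool (Fin N))
    (hstep : ∀ q, A.step q false = q + 1) (k : ℕ) (q : Fin N) :
    A.evalFrom q (List.replicate k false) = q + (k : Fin N) := by
  induction k generalizing q with
  | zero => simp
  | succ k ih =>
    rw [List.replicate_succ, evalFrom_cons, hstep, ih]
    push_cast
    rw [add_assoc, add_comm 1]

private lemma mod_ne_zero_of {N s : ℕ} (h1 : 0 < s) (h2 : s < 2 * N) (h3 : s ≠ N) :
    s % N ≠ 0 := by
  rcases Nat.lt_or_ge s N with h | h
  · rw [Nat.mod_eq_of_lt h]; omega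
  · rw [Nat.mod_eq_sub_mod h, Nat.mod_eq_of_lt (by omega)]; omega

/-- Letter `a` is `false`, letter `b` is `true`. A pure CNF formula (clauses `C i` with
polarity `pos i`) is satisfiable iff there is a DFA over `{a,b}` with at most `n + m`
states accepting every word of `P` and rejecting every word of `N` from the Gold-style
reduction. -/
theorem satisfiable_iff_consistent_dfa (n m : ℕ) (hn : 1 ≤ n) (hm : 1 ≤ m)
    (C : Fin m → Finset (Fin n)) (pos : Fin m → Bool) :
    (∃ β : Fin n → Bool, ∀ i, ∃ j ∈ C i, β j = pos i) ↔
    (∃ (σ : Type) (_ : Fintype σ) (A : DFA Bool σ),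
      Fintype.card σ ≤ n + m ∧
      [] ∈ A.accepts ∧
      List.replicate (n + m) false ∈ A.accepts ∧
      (∀ i : Fin m, pos i = true →
        List.replicate (i : ℕ) false ++ [true, true] ∈ A.accepts) ∧
      (∀ i, 0 < i → i < n + m → List.replicate i false ∉ A.accepts) ∧
      (∀ i : Fin m, pos i = false →
        List.replicate (i : ℕ) false ++ [true, true] ∉ A.accepts) ∧
      (∀ i : Fin m, ∀ r : ℕ, r < n + m →
        (r < m ∨ ∀ j : Fin n, m + (j : ℕ) = r → j ∉ C i) →
        List.replicate (i : ℕ) false ++ [true] ++ List.replicate (n + m - r) false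
          ∉ A.accepts)) := by
  classical
  have hN1 : 0 < n + m := by omega
  haveI : NeZero (n + m) := ⟨by omega⟩
  constructor
  · rintro ⟨β, hβ⟩
    choose f hfC hfβ using hβ
    set M : DFA Bool (Fin (n + m)) :=
      { step := fun q c =>
          if c then
            (if h : (q : ℕ) < m then
              (⟨m + (f ⟨q, h⟩ : ℕ), by have := (f ⟨(q : ℕ), h⟩).isLt; omega⟩ : Fin (n + m))
            else if β ⟨(q : ℕ) - m, by have := q.isLt; omega⟩ then
              ⟨0, hN1⟩ else ⟨1, by omega⟩)
          else q + 1,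
        start := ⟨0, hN1⟩,
        accept := {⟨0, hN1⟩} } with hM
    have hstepF : ∀ q, M.step q false = q + 1 := fun q => rfl
    have hzero : (⟨0, hN1⟩ : Fin (n + m)) = 0 := by
      apply Fin.ext; simp
    have heval : ∀ k, M.eval (List.replicate k false) = (k : Fin (n + m)) := by
      intro k
      show M.evalFrom _ _ = _
      rw [evalFrom_replicate_false M hstepF, hM]
      simp [hzero]
    have hstepT1 : ∀ (q : Fin (n + m)) (h : (q : ℕ) < m),
        M.step q true = (⟨m + (f ⟨(q : ℕ), h⟩ : ℕ), by have := (f ⟨(q : ℕ), h⟩).isLt; omega⟩ : Fin (n + m)) := by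
      intro q h
      simp only [M, if_true]
      rw [dif_pos h]
    have hstepT2 : ∀ (q : Fin (n + m)) (h : ¬ (q : ℕ) < m),
        M.step q true = (if β ⟨(q : ℕ) - m, by have := q.isLt; omega⟩ then
          ⟨0, hN1⟩ else (⟨1, by omega⟩ : Fin (n + m))) := by
      intro q h
      simp only [M, if_true]
      rw [dif_neg h]
    -- state after reading a^i b, for a clause i
    have hclause : ∀ i : Fin m,
        M.eval (List.replicate (i : ℕ) false ++ [true]) =
          (⟨m + (f i : ℕ), by have := (f i).isLt; omega⟩ : Fin (n + m)) := by
      intro i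
      rw [DFA.eval_append_singleton, heval]
      have hv : (((i : ℕ) : Fin (n + m)) : ℕ) < m := by
        rw [Fin.val_cast_of_lt (by omega)]; exact i.isLt
      rw [hstepT1 _ hv]
      have : (⟨(((i : ℕ) : Fin (n + m)) : ℕ), hv⟩ : Fin m) = i := by
        apply Fin.ext; simp [Fin.val_cast_of_lt (show (i : ℕ) < n + m by omega)]
      simp only [this]
    have hclause2 : ∀ i : Fin m,
        M.eval (List.replicate (i : ℕ) false ++ [true, true]) =
          (if β (f i) then ⟨0, hN1⟩ else (⟨1, by omega⟩ : Fin (n + m))) := by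
      intro i
      have : List.replicate (i : ℕ) false ++ [true, true]
          = (List.replicate (i : ℕ) false ++ [true]) ++ [true] := by simp
      rw [this, DFA.eval_append_singleton, hclause]
      have hnv : ¬ ((⟨m + (f i : ℕ), by have := (f i).isLt; omega⟩ : Fin (n + m)) : ℕ) < m := by
        simp
      rw [hstepT2 _ hnv]
      congr 2
      exact congrArg β (Fin.ext (by simp))
    refine ⟨Fin (n + m), inferInstance, M, by simp, ?_, ?_, ?_, ?_, ?_, ?_⟩
    · show M.eval [] ∈ M.accept
      simp [DFA.eval_nil, hM]
    · show M.eval _ ∈ M.accept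
      rw [heval]
      show _ ∈ ({⟨0, hN1⟩} : Set (Fin (n + m)))
      simp [hzero]
    · intro i hi
      show M.eval _ ∈ M.accept
      rw [hclause2 i, hfβ i, hi, if_pos rfl]
      exact rfl
    · intro k hk1 hk2
      show M.eval _ ∉ M.accept
      rw [heval]
      show _ ∉ ({⟨0, hN1⟩} : Set (Fin (n + m)))
      simp only [Set.mem_singleton_iff]
      intro hcon
      have := congrArg Fin.val hcon
      rw [Fin.val_cast_of_lt hk2] at this
      simp at this
      omega
    · intro i hi
      show M.eval _ ∉ M.accept
      rw [hclause2 i, hfβ i, hi, if_neg (by simp)]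
      show _ ∉ ({⟨0, hN1⟩} : Set (Fin (n + m)))
      simp only [Set.mem_singleton_iff]
      intro hcon
      have := congrArg Fin.val hcon
      simp at this
    · intro i r hr hcond
      show M.evalFrom M.start (List.replicate (i : ℕ) false ++ [true]
        ++ List.replicate (n + m - r) false) ∉ M.accept
      rw [DFA.evalFrom_of_append]
      rw [show M.evalFrom M.start (List.replicate (i : ℕ) false ++ [true])
            = M.eval (List.replicate (i : ℕ) false ++ [true]) from rfl, hclause i]
      rw [evalFrom_replicate_false M hstepF]
      show _ ∉ ({⟨0, hN1⟩} : Set (Fin (n + m)))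
      simp only [Set.mem_singleton_iff]
      intro hcon
      have hv := congrArg Fin.val hcon
      rw [Fin.add_def] at hv
      simp only [Fin.val_natCast] at hv
      have hfi : (f i : ℕ) < n := (f i).isLt
      have hne : m + (f i : ℕ) ≠ r := by
        rcases hcond with h | h
        · omega
        · intro hcon2
          exact h (f i) hcon2 (hfC i)
      have hmod : (n + m - r) % (n + m) = if r = 0 then 0 else n + m - r := by
        rcases Nat.eq_zero_or_pos r with h0 | h0
        · simp [h0]
        · rw [if_neg (by omega), Nat.mod_eq_of_lt (by omega)]
      rw [hmod] at hv
      rcases Nat.eq_zero_or_pos r with h0 | h0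
      · rw [if_pos h0] at hv
        rw [Nat.mod_eq_of_lt (by omega)] at hv
        omega
      · rw [if_neg (by omega)] at hv
        exact mod_ne_zero_of (by omega) (by omega) (by omega) hv
  · rintro ⟨σ, instF, A, hcard, h1, h2, h3, h4, h5, h6⟩
    set N := n + m with hNdef
    set s : ℕ → σ := fun k => A.eval (List.replicate k false) with hs
    have hs0 : s 0 ∈ A.accept := h1
    have hsN : s N ∈ A.accept := h2
    have hsmid : ∀ k, 0 < k → k < N → s k ∉ A.accept := by
      intro k hk1 hk2 hcon
      exact h4 k hk1 hk2 hcon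
    have hshift : ∀ k t, A.evalFrom (s k) (List.replicate t false) = s (k + t) := by
      intro k t
      rw [hs]
      show A.evalFrom (A.evalFrom A.start _) _ = A.evalFrom A.start _
      rw [← DFA.evalFrom_of_append, ← List.replicate_add]
    have key : ∀ i j : ℕ, i < j → j < N → s i ≠ s j := by
      intro i j hij hjN heq
      have e1 : A.evalFrom (s j) (List.replicate (N - j) false) = s N := by
        rw [hshift]; congr 1; omega
      have e2 : A.evalFrom (s i) (List.replicate (N - j) false) = s (i + (N - j)) :=
        hshift _ _
      rw [heq, e1] at e2
      exact hsmid (i + (N - j)) (by omega) (by omega) (e2 ▸ hsN)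
    have hinj : Function.Injective (fun k : Fin N => s k) := by
      intro i j hij
      by_contra hne
      rcases Nat.lt_or_ge (i : ℕ) (j : ℕ) with h | h
      · exact key i j h j.isLt hij
      · have h' : (j : ℕ) < (i : ℕ) := by
          rcases Nat.lt_or_ge (j : ℕ) (i : ℕ) with h'' | h''
          · exact h''
          · exact absurd (Fin.ext (by omega)) hne
        exact key j i h' i.isLt hij.symm
    have hb : Function.Bijective (fun k : Fin N => s k) := by
      rw [Fintype.bijective_iff_injective_and_card]
      refine ⟨hinj, ?_⟩
      have := Fintype.card_le_of_injective _ hinj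
      simp only [Fintype.card_fin] at this ⊢
      omega
    have hsN0 : s N = s 0 := by
      obtain ⟨k, hk⟩ := hb.2 (s N)
      have hk' : s (k : ℕ) = s N := hk
      rcases Nat.eq_zero_or_pos (k : ℕ) with h0 | h0
      · rw [← hk', h0]
      · exact absurd (by rw [hk']; exact hsN) (hsmid k h0 k.isLt)
    refine ⟨fun j => decide (A.step (s (m + (j : ℕ))) true ∈ A.accept), ?_⟩
    intro i
    obtain ⟨k, hk⟩ := hb.2 (A.step (s (i : ℕ)) true)
    simp only at hk
    -- the word a^i b a^(N-k) is accepted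
    have hacc : List.replicate (i : ℕ) false ++ [true] ++ List.replicate (N - (k : ℕ)) false
        ∈ A.accepts := by
      rw [DFA.mem_accepts]
      show A.evalFrom A.start _ ∈ A.accept
      rw [DFA.evalFrom_of_append]
      have e0 : A.evalFrom A.start (List.replicate (i : ℕ) false ++ [true])
          = A.step (s (i : ℕ)) true := by
        show A.eval _ = _
        rw [DFA.eval_append_singleton]
      rw [e0, ← hk, hshift]
      have : (k : ℕ) + (N - (k : ℕ)) = N := by have := k.isLt; omega
      rw [this, hsN0]
      exact hs0
    have hkcond : ¬ ((k : ℕ) < m ∨ ∀ j : Fin n, m + (j : ℕ) = (k : ℕ) → j ∉ C i) := by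
      intro hcon
      exact h6 i (k : ℕ) k.isLt hcon hacc
    push_neg at hkcond
    obtain ⟨hkm, j, hjk, hjC⟩ := hkcond
    refine ⟨j, hjC, ?_⟩
    have hstep2 : A.step (A.step (s (i : ℕ)) true) true
        = A.eval (List.replicate (i : ℕ) false ++ [true, true]) := by
      have : List.replicate (i : ℕ) false ++ [true, true]
          = (List.replicate (i : ℕ) false ++ [true]) ++ [true] := by simp
      rw [this, DFA.eval_append_singleton]
      congr 1
      rw [DFA.eval_append_singleton]
    have hβj : A.step (s (m + (j : ℕ))) true
        = A.eval (List.replicate (i : ℕ) false ++ [true, true]) := by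
      rw [hjk, hk, hstep2]
    cases hpos : pos i with
    | true =>
      have := h3 i hpos
      rw [DFA.mem_accepts] at this
      simp only [decide_eq_true_eq]
      rw [hβj]
      exact this
    | false =>
      have := h5 i hpos
      rw [DFA.mem_accepts] at this
      simp only [decide_eq_false_iff_not]
      rw [hβj]
      exact this
end

section
/- Consider the DFA A constructed from a satisfying assignment β of a pure CNF formula (states s_0,...,s_{k-1} with k = n+m, δ(s_i,a)=s_{(i+1) mod k}, δ(s_i,b)=s_{m+j_i} where x_{j_i} is a variable of C_i satisfied by β for i<m, δ(s_{m+j},b)=s_0 if β(x_j)=true and δ(s_{m+j},b)=s_{m+j} otherwise, F={s_0}). Then A rejects every word a^i b a^{k-r} with 0 ≤ i < m, 0 ≤ r < k, and (r < m or x_{r-m} ∉ C_i). -/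
/-!
Reading `a` as a rotation of the `k = m + n` states, `a^i` leads from `s₀` to the clause state
`sᵢ`, the letter `b` then moves to the variable state `s_{m + w i}`, and `a^{k-r}` ends in
`s_{(m + w i + k - r) mod k}`. Since both `m + w i` and `r` are below `k`, this is `s₀` only
when `r = m + w i`, which would put `x_{r-m} = w i` in `C i`.
-/

namespace DFA

variable {α : Type*} {k : ℕ}

theorem val_evalFrom_replicate_of_val_step {A : DFA α (Fin k)} {a : α}
    (hstep : ∀ t : Fin k, (A.step t a : ℕ) = (t + 1) % k) (c : ℕ) (t : Fin k) :
    (A.evalFrom t (List.replicate c a) : ℕ) = (t + c) % k := by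
  induction c generalizing t with
  | zero => simp [Nat.mod_eq_of_lt t.isLt]
  | succ c ih =>
    rw [List.replicate_succ, evalFrom_cons, ih, hstep, Nat.mod_add_mod]
    ring_nf

end DFA

theorem Nat.eq_of_add_sub_mod_eq_zero {x r k : ℕ} (hx : x < k) (hr : r < k)
    (h : (x + (k - r)) % k = 0) : x = r := by
  rcases lt_or_ge (x + (k - r)) k with hlt | hge
  · rw [Nat.mod_eq_of_lt hlt] at h
    omega
  · rw [Nat.mod_eq_sub_mod hge, Nat.mod_eq_of_lt (by omega)] at h
    omega

/-- Letter `a` is `false`, letter `b` is `true`. The DFA constructed from a satisfying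
assignment `β` of a pure CNF formula (states `Fin (m + n)`: clause states `0, …, m-1`,
variable states `m, …, m+n-1`, `a`-transitions forming a cycle, `b`-transitions given by a
witness `w i ∈ C i` with `β (w i) = pos i`, unique accepting state `s₀`) rejects every
word `a^i b a^{k-r}` with `i < m`, `r < k = m + n`, and (`r < m` or `x_{r-m} ∉ C i`). -/
theorem constructed_dfa_rejects_third_negative_set (n m : ℕ) (hm : 1 ≤ m)
    (C : Fin m → Finset (Fin n)) (pos : Fin m → Bool)
    (β : Fin n → Bool) (w : Fin m → Fin n)
    (hw : ∀ i, w i ∈ C i ∧ β (w i) = pos i)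
    (A : DFA Bool (Fin (m + n)))
    (hstart : A.start = ⟨0, by omega⟩)
    (hacc : A.accept = {A.start})
    (hstepa : ∀ t : Fin (m + n),
      A.step t false = ⟨((t : ℕ) + 1) % (m + n), Nat.mod_lt _ (by omega)⟩)
    (hstepb1 : ∀ i : Fin m, A.step (Fin.castAdd n i) true = Fin.natAdd m (w i)) :
    ∀ i : Fin m, ∀ r : ℕ, r < m + n →
      (r < m ∨ ∀ j : Fin n, m + (j : ℕ) = r → j ∉ C i) →
      List.replicate (i : ℕ) false ++ [true] ++ List.replicate (m + n - r) false
        ∉ A.accepts := by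
  intro i r hr hcond haccepts
  have hrotate := A.val_evalFrom_replicate_of_val_step (fun t ↦ congrArg Fin.val (hstepa t))
  have hclause : A.evalFrom A.start (List.replicate i false) = Fin.castAdd n i := by
    ext
    simp [hrotate, hstart, Nat.mod_eq_of_lt (show (i : ℕ) < m + n by omega)]
  have hvariable : A.evalFrom A.start (List.replicate i false ++ [true]) = Fin.natAdd m (w i) := by
    rw [DFA.evalFrom_append_singleton, hclause, hstepb1]
  rw [DFA.mem_accepts, hacc, Set.mem_singleton_iff, DFA.eval, DFA.evalFrom_of_append, hvariable,
    Fin.ext_iff, hrotate, hstart] at haccepts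
  have hr_eq : m + (w i : ℕ) = r :=
    Nat.eq_of_add_sub_mod_eq_zero (by simp) hr haccepts
  rcases hcond with hr_clause | hr_variable
  · omega
  · exact hr_variable (w i) hr_eq (hw i).1
end
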